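/- arXiv:2202.00940 — 3 statements merged into one kernel-verified Lean document; each statement's English description precedes it below -/
import Mathlib

section
/- Let φ ∈ L²(ℝ) be a Schwartz function (or φ in the Schwartz class), m ≥ 1, and suppose x^m φ ∈ L² and the m-th derivative φ^{(m)} ∈ L². Then ‖φ‖² ≤ 2^m ‖x^m φ‖ · ‖φ^{(m)}‖. -/
/-! On Schwartz space with the `L²` inner product, multiplication `X` by `x` is symmetric, the
derivative `D` is antisymmetric, and `D X - X D = 1`. Hence
`‖φ‖² = -(⟪Dφ, Xφ⟫ + ⟪Xφ, Dφ⟫) ≤ 2 ‖Xφ‖ ‖Dφ‖`. For `A = X` and for `A = D`,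
`‖A^(k+1) φ‖² = ±⟪A^k φ, A^(k+2) φ⟫ ≤ ‖A^k φ‖ ‖A^(k+2) φ‖`, so both sequences of norms are
log-convex and `‖A φ‖^m ≤ ‖φ‖^(m-1) ‖A^m φ‖`. Raising the case `m = 1` to the `m`-th power and
inserting these bounds gives the theorem. -/

open MeasureTheory

open scoped InnerProductSpace SchwartzMap

section CommutationRelation

variable {𝕜 V H : Type*} [RCLike 𝕜] [NormedAddCommGroup H] [InnerProductSpace 𝕜 H]

theorem sq_norm_iterate_succ_le (ι : V → H) (A : V → V) {s : 𝕜} (hs : ‖s‖ = 1)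
    (hA : ∀ f g, ⟪ι (A f), ι g⟫_𝕜 = s * ⟪ι f, ι (A g)⟫_𝕜) (f : V) (k : ℕ) :
    ‖ι (A^[k + 1] f)‖ ^ 2 ≤ ‖ι (A^[k] f)‖ * ‖ι (A^[k + 2] f)‖ := by
  simp only [Function.iterate_succ_apply']
  calc ‖ι (A (A^[k] f))‖ ^ 2 = ‖⟪ι (A (A^[k] f)), ι (A (A^[k] f))⟫_𝕜‖ := by
        rw [inner_self_eq_norm_sq_to_K, norm_pow, RCLike.norm_ofReal, abs_norm]
    _ = ‖⟪ι (A^[k] f), ι (A (A (A^[k] f)))⟫_𝕜‖ := by rw [hA, norm_mul, hs, one_mul]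
    _ ≤ _ := norm_inner_le_norm _ _

variable [AddCommGroup V] [Module 𝕜 V]

theorem sq_norm_le_two_mul_of_commutator_eq_id (ι : V →ₗ[𝕜] H) (X D : V → V)
    (hX : ∀ f g, ⟪ι (X f), ι g⟫_𝕜 = ⟪ι f, ι (X g)⟫_𝕜)
    (hD : ∀ f g, ⟪ι (D f), ι g⟫_𝕜 = -⟪ι f, ι (D g)⟫_𝕜)
    (hDX : ∀ f, D (X f) = f + X (D f)) (f : V) :
    ‖ι f‖ ^ 2 ≤ 2 * (‖ι (X f)‖ * ‖ι (D f)‖) := by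
  have hself : ⟪ι f, ι f⟫_𝕜 = -(⟪ι (D f), ι (X f)⟫_𝕜 + ⟪ι (X f), ι (D f)⟫_𝕜) := by
    rw [hD, hX, hDX, map_add, inner_add_right]
    ring
  calc ‖ι f‖ ^ 2 = ‖⟪ι f, ι f⟫_𝕜‖ := by
        rw [inner_self_eq_norm_sq_to_K, norm_pow, RCLike.norm_ofReal, abs_norm]
    _ ≤ ‖⟪ι (D f), ι (X f)⟫_𝕜‖ + ‖⟪ι (X f), ι (D f)⟫_𝕜‖ := by
        rw [hself, norm_neg]
        exact norm_add_le _ _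
    _ ≤ ‖ι (D f)‖ * ‖ι (X f)‖ + ‖ι (X f)‖ * ‖ι (D f)‖ :=
        add_le_add (norm_inner_le_norm _ _) (norm_inner_le_norm _ _)
    _ = 2 * (‖ι (X f)‖ * ‖ι (D f)‖) := by ring

end CommutationRelation

section LogConvex

variable {c : ℕ → ℝ}

theorem mul_le_mul_of_sq_le_mul (hc : ∀ k, 0 ≤ c k) (h : ∀ k, c (k + 1) ^ 2 ≤ c k * c (k + 2))
    (n : ℕ) : c 1 * c (n + 1) ≤ c 0 * c (n + 2) := by
  induction n with
  | zero => simpa [sq] using h 0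
  | succ n ih =>
    rcases (hc (n + 2)).eq_or_lt with hzero | hpos
    · rw [← hzero, mul_zero]
      exact mul_nonneg (hc 0) (hc _)
    · refine le_of_mul_le_mul_left ?_ hpos
      calc c (n + 2) * (c 1 * c (n + 2)) = c 1 * c (n + 2) ^ 2 := by ring
        _ ≤ c 1 * (c (n + 1) * c (n + 3)) := mul_le_mul_of_nonneg_left (h (n + 1)) (hc 1)
        _ = c 1 * c (n + 1) * c (n + 3) := by ring
        _ ≤ c 0 * c (n + 2) * c (n + 3) := mul_le_mul_of_nonneg_right ih (hc _)
        _ = c (n + 2) * (c 0 * c (n + 3)) := by ring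

theorem pow_succ_le_of_sq_le_mul (hc : ∀ k, 0 ≤ c k) (h : ∀ k, c (k + 1) ^ 2 ≤ c k * c (k + 2))
    (n : ℕ) : c 1 ^ (n + 1) ≤ c 0 ^ n * c (n + 1) := by
  induction n with
  | zero => simp
  | succ n ih =>
    calc c 1 ^ (n + 2) = c 1 * c 1 ^ (n + 1) := by ring
      _ ≤ c 1 * (c 0 ^ n * c (n + 1)) := mul_le_mul_of_nonneg_left ih (hc 1)
      _ = c 0 ^ n * (c 1 * c (n + 1)) := by ring
      _ ≤ c 0 ^ n * (c 0 * c (n + 2)) :=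
        mul_le_mul_of_nonneg_left (mul_le_mul_of_sq_le_mul hc h n) (pow_nonneg (hc 0) n)
      _ = c 0 ^ (n + 1) * c (n + 2) := by ring

theorem sq_le_pow_mul_of_sq_le_mul {a b : ℕ → ℝ} {C : ℝ} (hC : 0 ≤ C) (ha : ∀ k, 0 ≤ a k)
    (hb : ∀ k, 0 ≤ b k) (ha2 : ∀ k, a (k + 1) ^ 2 ≤ a k * a (k + 2))
    (hb2 : ∀ k, b (k + 1) ^ 2 ≤ b k * b (k + 2)) (hab : b 0 = a 0)
    (h1 : a 0 ^ 2 ≤ C * (a 1 * b 1)) (n : ℕ) :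
    a 0 ^ 2 ≤ C ^ (n + 1) * (a (n + 1) * b (n + 1)) := by
  rcases (ha 0).eq_or_lt with hzero | hpos
  · rw [← hzero, zero_pow two_ne_zero]
    exact mul_nonneg (pow_nonneg hC _) (mul_nonneg (ha _) (hb _))
  refine le_of_mul_le_mul_left ?_ (pow_pos (pow_pos hpos 2) n)
  calc (a 0 ^ 2) ^ n * a 0 ^ 2 = (a 0 ^ 2) ^ (n + 1) := by ring
    _ ≤ (C * (a 1 * b 1)) ^ (n + 1) := pow_le_pow_left₀ (by positivity) h1 _
    _ = C ^ (n + 1) * (a 1 ^ (n + 1) * b 1 ^ (n + 1)) := by ring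
    _ ≤ C ^ (n + 1) * ((a 0 ^ n * a (n + 1)) * (b 0 ^ n * b (n + 1))) := by
        refine mul_le_mul_of_nonneg_left (mul_le_mul ?_ ?_ (pow_nonneg (hb 1) _) ?_)
          (pow_nonneg hC _)
        exacts [pow_succ_le_of_sq_le_mul ha ha2 n, pow_succ_le_of_sq_le_mul hb hb2 n,
          mul_nonneg (pow_nonneg (ha 0) n) (ha _)]
    _ = (a 0 ^ 2) ^ n * (C ^ (n + 1) * (a (n + 1) * b (n + 1))) := by rw [hab]; ring

end LogConvex

namespace SchwartzMap

theorem norm_toLp_two {E F : Type*} [NormedAddCommGroup E] [NormedSpace ℝ E]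
    [FiniteDimensional ℝ E] [MeasurableSpace E] [BorelSpace E] [NormedAddCommGroup F]
    [NormedSpace ℝ F] {μ : Measure E} [μ.HasTemperateGrowth] (f : 𝓢(E, F)) :
    ‖f.toLp 2 μ‖ = √(∫ x, ‖f x‖ ^ 2 ∂μ) := by
  rw [norm_toLp' two_ne_zero ENNReal.ofNat_ne_top, Real.sqrt_eq_rpow]
  norm_num

section Multiplication

variable {E : Type*} [NormedAddCommGroup E] [NormedSpace ℝ E] {g : E → ℝ}

theorem inner_toL2_smulLeftCLM_left {F : Type*} [NormedAddCommGroup F] [InnerProductSpace ℂ F]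
    [FiniteDimensional ℝ E] [MeasurableSpace E] [BorelSpace E] {μ : Measure E}
    [μ.HasTemperateGrowth] (hg : g.HasTemperateGrowth) (f h : 𝓢(E, F)) :
    ⟪(smulLeftCLM F g f).toLp 2 μ, h.toLp 2 μ⟫_ℂ =
      ⟪f.toLp 2 μ, (smulLeftCLM F g h).toLp 2 μ⟫_ℂ := by
  simp only [inner_toL2_toL2_eq, smulLeftCLM_apply_apply hg, RCLike.real_smul_eq_coe_smul (K := ℂ),
    inner_smul_real_left, inner_smul_real_right]

theorem iterate_smulLeftCLM_apply {F : Type*} [NormedAddCommGroup F] [NormedSpace ℝ F]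
    (hg : g.HasTemperateGrowth) (f : 𝓢(E, F)) (k : ℕ) (x : E) :
    (smulLeftCLM F g)^[k] f x = g x ^ k • f x := by
  induction k with
  | zero => simp
  | succ k ih =>
    rw [Function.iterate_succ_apply', smulLeftCLM_apply_apply hg, ih, smul_smul, pow_succ']

end Multiplication

section Derivative

theorem inner_toL2_derivCLM_left (f g : 𝓢(ℝ, ℂ)) :
    ⟪(derivCLM ℝ ℂ f).toLp 2, g.toLp 2⟫_ℂ = -⟪f.toLp 2, (derivCLM ℝ ℂ g).toLp 2⟫_ℂ := by
  -- integration by parts for the `ℝ`-bilinear pairing `(a, b) ↦ b * conj a = ⟪a, b⟫_ℂ`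
  have := integral_bilinear_deriv_right_eq_neg_left f g
    ((ContinuousLinearMap.mul ℝ ℂ).flip.comp Complex.conjCLE.toContinuousLinearMap)
  simp only [ContinuousLinearMap.comp_apply, ContinuousLinearMap.flip_apply,
    ContinuousLinearMap.mul_apply', ContinuousLinearEquiv.coe_coe, Complex.conjCLE_apply] at this
  simp only [inner_toL2_toL2_eq, derivCLM_apply, RCLike.inner_apply, this, neg_neg]

theorem iterate_derivCLM_apply {F : Type*} [NormedAddCommGroup F] [NormedSpace ℝ F]
    (f : 𝓢(ℝ, F)) (k : ℕ) : ⇑((derivCLM ℝ F)^[k] f) = iteratedDeriv k f := by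
  induction k with
  | zero => simp
  | succ k ih => rw [Function.iterate_succ_apply', iteratedDeriv_succ, ← ih]; rfl

theorem derivCLM_smulLeftCLM_id {F : Type*} [NormedAddCommGroup F] [NormedSpace ℝ F]
    (f : 𝓢(ℝ, F)) :
    derivCLM ℝ F (smulLeftCLM F (fun x : ℝ ↦ x) f) =
      f + smulLeftCLM F (fun x : ℝ ↦ x) (derivCLM ℝ F f) := by
  ext x
  have hid : Function.HasTemperateGrowth (fun x : ℝ ↦ x) := by fun_prop
  have hderiv : HasDerivAt (fun y : ℝ ↦ y • f y) (x • deriv f x + (1 : ℝ) • f x) x :=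
    (hasDerivAt_id x).smul (f.hasDerivAt x)
  rw [derivCLM_apply, add_apply, smulLeftCLM_apply_apply hid, smulLeftCLM_apply hid, hderiv.deriv,
    one_smul, add_comm, derivCLM_apply]

end Derivative

end SchwartzMap

/-- Generalized uncertainty principle on `ℝ`: for Schwartz `φ` and `m ≥ 1`,
`‖φ‖² ≤ 2^m ‖x^m φ‖ · ‖φ^{(m)}‖` (L² norms). -/
theorem generalized_uncertainty (m : ℕ) (hm : 1 ≤ m) (φ : SchwartzMap ℝ ℂ) :
    (∫ x : ℝ, ‖φ x‖ ^ 2) ≤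
      2 ^ m * Real.sqrt (∫ x : ℝ, ‖(x : ℂ) ^ m * φ x‖ ^ 2) *
        Real.sqrt (∫ x : ℝ, ‖iteratedDeriv m (⇑φ) x‖ ^ 2) := by
  obtain ⟨n, rfl⟩ := Nat.exists_eq_add_of_le' hm
  have hid : Function.HasTemperateGrowth (fun x : ℝ ↦ x) := by fun_prop
  set X := SchwartzMap.smulLeftCLM ℂ (fun x : ℝ ↦ x)
  set D := SchwartzMap.derivCLM ℝ ℂ
  let ι : 𝓢(ℝ, ℂ) →ₗ[ℂ] Lp ℂ 2 (volume : Measure ℝ) :=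
    (SchwartzMap.toLpCLM ℂ ℂ 2 volume).toLinearMap
  have hX : ∀ f g, ⟪ι (X f), ι g⟫_ℂ = ⟪ι f, ι (X g)⟫_ℂ :=
    SchwartzMap.inner_toL2_smulLeftCLM_left hid
  have hD : ∀ f g, ⟪ι (D f), ι g⟫_ℂ = -⟪ι f, ι (D g)⟫_ℂ :=
    SchwartzMap.inner_toL2_derivCLM_left
  have key := sq_le_pow_mul_of_sq_le_mul (a := fun k ↦ ‖ι (X^[k] φ)‖) (b := fun k ↦ ‖ι (D^[k] φ)‖)
    zero_le_two (fun _ ↦ norm_nonneg _) (fun _ ↦ norm_nonneg _)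
    (sq_norm_iterate_succ_le ι X (s := (1 : ℂ)) norm_one (by simpa using hX) φ)
    (sq_norm_iterate_succ_le ι D (s := (-1 : ℂ)) (by simp) (by simpa using hD) φ) rfl
    (sq_norm_le_two_mul_of_commutator_eq_id ι X D hX hD SchwartzMap.derivCLM_smulLeftCLM_id φ) n
  have hnorm : ∀ f : 𝓢(ℝ, ℂ), ‖ι f‖ = √(∫ x, ‖f x‖ ^ 2) := SchwartzMap.norm_toLp_two
  simp only [hnorm, X, D, Function.iterate_zero_apply, SchwartzMap.iterate_smulLeftCLM_apply hid,
    SchwartzMap.iterate_derivCLM_apply] at key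
  rw [Real.sq_sqrt (integral_nonneg fun _ ↦ by positivity), ← mul_assoc] at key
  convert key using 6 with x
  rw [Complex.real_smul, Complex.ofReal_pow]
end

section
/- Let G be a countable graph with maximal degree ≤ D, A its adjacency operator, V a bounded real potential, H = A + V on ℓ²(G), and fix an origin o with |x| = d(x, o). If ψ ∈ ℓ²(G) satisfies ‖ |x| ψ ‖ < ∞ (i.e. ∑_x |x|²|ψ(x)|² < ∞), then for all t ≥ 0, ∑_x |x|² |e^{-itH}ψ(x)|² ≤ (‖|x|ψ‖ + tD‖ψ‖)². -/
/-!
Truncate the weight: let `M` be multiplication by `min (|x|) n`. In the Heisenberg picture,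
`s ↦ e^{isH} M e^{-isH}` has derivative `e^{isH} i[M, H] e^{-isH}`, whose norm is `‖[M, H]‖`,
so `‖M e^{-itH} ψ‖ ≤ ‖M ψ‖ + t ‖[M, H]‖ ‖ψ‖`. The potential commutes with `M`, and
`min (|x|) n` changes by at most one along an edge, so `[M, H]` is a neighbour sum with
coefficients of modulus `≤ 1`; a Schur-type estimate bounds its norm by the degree bound `D`.
Letting `n → ∞` in the finite partial sums gives the bound for the untruncated weight.
-/

open Finset NormedSpace
open scoped lp

section CStarAlgebra

variable {A : Type*} [CStarAlgebra A]

theorem exp_smul_mem_unitary_of_mem_skewAdjoint {a : A} (ha : a ∈ skewAdjoint A) (s : ℝ) :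
    exp (s • a) ∈ unitary A := by
  -- `exp_mem_unitary_of_mem_skewAdjoint` is stated for `ℚ`-algebras
  let : NormedAlgebra ℚ A := .restrictScalars ℚ ℂ A
  exact exp_mem_unitary_of_mem_skewAdjoint (skewAdjoint.smul_mem s ha)

theorem norm_exp_conj_sub_le {a : A} (ha : a ∈ skewAdjoint A) (M : A) {t : ℝ} (ht : 0 ≤ t) :
    ‖exp (t • -a) * M * exp (t • a) - M‖ ≤ t * ‖M * a - a * M‖ := by
  have hderiv : ∀ s : ℝ, HasDerivAt (fun s : ℝ => exp (s • -a) * M * exp (s • a))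
      (exp (s • -a) * (M * a - a * M) * exp (s • a)) s := by
    intro s
    convert ((hasDerivAt_exp_smul_const (-a) s).mul_const M).fun_mul
      (hasDerivAt_exp_smul_const' a s) using 1
    noncomm_ring
  have hbound : ∀ s : ℝ, ‖exp (s • -a) * (M * a - a * M) * exp (s • a)‖ ≤ ‖M * a - a * M‖ :=
    fun s => by
      rw [CStarRing.norm_mul_mem_unitary _ (exp_smul_mem_unitary_of_mem_skewAdjoint ha s),
        CStarRing.norm_mem_unitary_mul _ (exp_smul_mem_unitary_of_mem_skewAdjoint (neg_mem ha) s)]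
  simpa [mul_comm] using norm_image_sub_le_of_norm_deriv_le_segment'
    (fun s _ => (hderiv s).hasDerivWithinAt) (fun s _ => hbound s) t (Set.right_mem_Icc.mpr ht)

end CStarAlgebra

theorem IsSelfAdjoint.norm_apply_exp_apply_le {E : Type*} [NormedAddCommGroup E]
    [InnerProductSpace ℂ E] [CompleteSpace E] {H : E →L[ℂ] E} (hH : IsSelfAdjoint H)
    (M : E →L[ℂ] E) (ψ : E) {t : ℝ} (ht : 0 ≤ t) :
    ‖M (NormedSpace.exp ((-(t : ℂ) * Complex.I) • H) ψ)‖ ≤ ‖M ψ‖ + t * ‖M * H - H * M‖ * ‖ψ‖ := by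
  set a := -(Complex.I • H)
  have ha : a ∈ skewAdjoint (E →L[ℂ] E) :=
    neg_mem (hH.smul_mem_skewAdjoint (by simp [skewAdjoint.mem_iff, Complex.conj_I]))
  have hexp : NormedSpace.exp ((-(t : ℂ) * Complex.I) • H) = NormedSpace.exp (t • a) := by
    rw [← Complex.coe_smul, smul_neg, smul_smul, neg_mul, neg_smul]
  have hcomm : M * a - a * M = -Complex.I • (M * H - H * M) := by
    simp only [a, mul_neg, neg_mul, mul_smul_comm, smul_mul_assoc, smul_sub, neg_smul]
  have hconj := ContinuousLinearMap.norm_map_of_mem_unitary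
    (exp_smul_mem_unitary_of_mem_skewAdjoint (neg_mem ha) t) (M (NormedSpace.exp (t • a) ψ))
  calc ‖M (NormedSpace.exp ((-(t : ℂ) * Complex.I) • H) ψ)‖
      = ‖M ψ + (NormedSpace.exp (t • -a) * M * NormedSpace.exp (t • a) - M) ψ‖ := by
        rw [hexp, ← hconj]
        simp
    _ ≤ ‖M ψ‖ + ‖NormedSpace.exp (t • -a) * M * NormedSpace.exp (t • a) - M‖ * ‖ψ‖ :=
        norm_add_le_of_le le_rfl (ContinuousLinearMap.le_opNorm _ _)
    _ ≤ ‖M ψ‖ + t * ‖M * a - a * M‖ * ‖ψ‖ := by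
        gcongr
        exact norm_exp_conj_sub_le ha M ht
    _ = ‖M ψ‖ + t * ‖M * H - H * M‖ * ‖ψ‖ := by
        rw [hcomm, norm_smul]
        simp

theorem Complex.norm_ofReal_mul_le {r K : ℝ} (hr : |r| ≤ K) (z : ℂ) : ‖(r : ℂ) * z‖ ≤ K * ‖z‖ := by
  rw [norm_mul, Complex.norm_real, Real.norm_eq_abs]
  exact mul_le_mul_of_nonneg_right hr (norm_nonneg _)

namespace lp

variable {ι : Type*}

theorem norm_sq_eq_tsum {E : ι → Type*} [∀ i, NormedAddCommGroup (E i)] (f : lp E 2) :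
    ‖f‖ ^ 2 = ∑' i, ‖f i‖ ^ 2 := by
  simpa using lp.norm_rpow_eq_tsum (p := 2) (by norm_num) f

theorem summable_norm_sq {E : ι → Type*} [∀ i, NormedAddCommGroup (E i)] (f : lp E 2) :
    Summable fun i => ‖f i‖ ^ 2 := by
  simpa using (lp.memℓp f).summable (p := 2) (by norm_num)

noncomputable def mulCLM (f : ι → ℝ) {K : ℝ} (hf : ∀ i, |f i| ≤ K) : ℓ²(ι, ℂ) →L[ℂ] ℓ²(ι, ℂ) :=
  LinearMap.mkContinuousOfExistsBound
    { toFun g := ⟨fun i => (f i : ℂ) * g i,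
        (lp.memℓp g).norm.const_mul K |>.mono fun i => Complex.norm_ofReal_mul_le (hf i) (g i)⟩
      map_add' g h := lp.ext <| funext fun i => mul_add _ _ _
      map_smul' c g := lp.ext <| funext fun i => mul_left_comm _ _ _ }
    ⟨‖(K : ℂ)‖, fun g => (lp.norm_mono two_ne_zero (y := (K : ℂ) • g) fun i =>
      (Complex.norm_ofReal_mul_le (hf i) (g i)).trans <| by
        rw [lp.coeFn_smul, Pi.smul_apply, norm_smul, Complex.norm_real, Real.norm_eq_abs]
        gcongr
        exact le_abs_self K).trans_eq
        (lp.norm_const_smul two_ne_zero g)⟩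

@[simp]
theorem mulCLM_apply (f : ι → ℝ) {K : ℝ} (hf : ∀ i, |f i| ≤ K) (g : ℓ²(ι, ℂ)) (i : ι) :
    mulCLM f hf g i = f i * g i :=
  rfl

theorem norm_mulCLM_apply_sq (f : ι → ℝ) {K : ℝ} (hf : ∀ i, |f i| ≤ K) (g : ℓ²(ι, ℂ)) :
    ‖mulCLM f hf g‖ ^ 2 = ∑' i, f i ^ 2 * ‖g i‖ ^ 2 := by
  simp [norm_sq_eq_tsum, mul_pow]

end lp

theorem tsum_sq_mul_le_of_forall_tsum_min_sq_mul_le {ι : Type*} (d : ι → ℕ) {a : ι → ℝ}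
    (ha : 0 ≤ a) (hs : Summable a) {B : ℝ} (h : ∀ n : ℕ, ∑' i, min (d i : ℝ) n ^ 2 * a i ≤ B) :
    ∑' i, (d i : ℝ) ^ 2 * a i ≤ B := by
  refine Real.tsum_le_of_sum_le (fun i => mul_nonneg (sq_nonneg _) (ha i)) fun s => ?_
  set n := s.sup d
  have hsummable : Summable fun i => min (d i : ℝ) n ^ 2 * a i :=
    (hs.mul_left ((n : ℝ) ^ 2)).of_nonneg_of_le (fun i => mul_nonneg (sq_nonneg _) (ha i))
      fun i => by gcongr; exacts [ha i, min_le_right _ _]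
  calc ∑ i ∈ s, (d i : ℝ) ^ 2 * a i = ∑ i ∈ s, min (d i : ℝ) n ^ 2 * a i :=
        sum_congr rfl fun i hi => by rw [min_eq_left (mod_cast le_sup hi)]
    _ ≤ ∑' i, min (d i : ℝ) n ^ 2 * a i :=
        hsummable.sum_le_tsum s fun i _ => mul_nonneg (sq_nonneg _) (ha i)
    _ ≤ B := h n

namespace SimpleGraph

variable {V : Type*} {G : SimpleGraph V}

theorem Adj.abs_dist_sub_dist_le_one {v w : V} (h : G.Adj v w) (u : V) :
    |(G.dist u v : ℝ) - G.dist u w| ≤ 1 := by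
  have : G.dist u v ≤ G.dist u w + 1 ∧ G.dist u w ≤ G.dist u v + 1 := by
    rcases h.diff_dist_adj (u := u) with h | h | h <;> omega
  rw [abs_sub_le_iff, sub_le_iff_le_add', sub_le_iff_le_add']
  exact_mod_cast this

variable [∀ v, Fintype (G.neighborSet v)] {D : ℕ}

theorem sum_sum_neighborFinset_le_mul_tsum (hD : ∀ v, G.degree v ≤ D) {g : V → ℝ}
    (hg : 0 ≤ g) (hs : Summable g) (s : Finset V) :
    ∑ v ∈ s, ∑ u ∈ G.neighborFinset v, g u ≤ D * ∑' u, g u := by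
  classical
  rw [sum_comm' (t' := s.biUnion (G.neighborFinset ·)) (s' := fun u => s.filter (G.Adj u))
    fun v u => by simp only [mem_filter, mem_biUnion, mem_neighborFinset]; grind [adj_comm]]
  calc ∑ u ∈ s.biUnion (G.neighborFinset ·), ∑ v ∈ s.filter (G.Adj u), g u
      ≤ ∑ u ∈ s.biUnion (G.neighborFinset ·), D * g u := by
        gcongr with u
        rw [sum_const, nsmul_eq_mul]
        gcongr
        · exact hg u
        · exact_mod_cast (card_le_card fun v hv => by simpa using (mem_filter.1 hv).2).trans (hD u)
    _ = D * ∑ u ∈ s.biUnion (G.neighborFinset ·), g u := (mul_sum ..).symm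
    _ ≤ D * ∑' u, g u := by gcongr; exact hs.sum_le_tsum _ fun u _ => hg u

theorem norm_sum_neighborFinset_mul_sq_le (hD : ∀ v, G.degree v ≤ D) {c : V → ℂ} (v : V)
    (hc : ∀ u, G.Adj v u → ‖c u‖ ≤ 1) (ψ : V → ℂ) :
    ‖∑ u ∈ G.neighborFinset v, c u * ψ u‖ ^ 2 ≤ D * ∑ u ∈ G.neighborFinset v, ‖ψ u‖ ^ 2 := by
  have hle : ‖∑ u ∈ G.neighborFinset v, c u * ψ u‖ ≤ ∑ u ∈ G.neighborFinset v, ‖ψ u‖ :=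
    (norm_sum_le _ _).trans <| sum_le_sum fun u hu => by
      rw [norm_mul]
      exact mul_le_of_le_one_left (norm_nonneg _) (hc u ((mem_neighborFinset ..).1 hu))
  calc ‖∑ u ∈ G.neighborFinset v, c u * ψ u‖ ^ 2
      ≤ (∑ u ∈ G.neighborFinset v, ‖ψ u‖) ^ 2 := by gcongr
    _ ≤ #(G.neighborFinset v) * ∑ u ∈ G.neighborFinset v, ‖ψ u‖ ^ 2 := sq_sum_le_card_mul_sum_sq
    _ ≤ D * ∑ u ∈ G.neighborFinset v, ‖ψ u‖ ^ 2 := by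
        gcongr
        exact_mod_cast hD v

theorem norm_le_of_eq_sum_neighborFinset (hD : ∀ v, G.degree v ≤ D) {c : V → V → ℂ}
    (hc : ∀ v u, G.Adj v u → ‖c v u‖ ≤ 1) {ψ ξ : ℓ²(V, ℂ)}
    (hξ : ∀ v, ξ v = ∑ u ∈ G.neighborFinset v, c v u * ψ u) :
    ‖ξ‖ ≤ D * ‖ψ‖ := by
  refine lp.norm_le_of_forall_sum_le (by norm_num) (by positivity) fun s => ?_
  simp only [ENNReal.toReal_ofNat, Real.rpow_two, hξ]
  calc ∑ v ∈ s, ‖∑ u ∈ G.neighborFinset v, c v u * ψ u‖ ^ 2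
      ≤ ∑ v ∈ s, D * ∑ u ∈ G.neighborFinset v, ‖ψ u‖ ^ 2 :=
        sum_le_sum fun v _ => norm_sum_neighborFinset_mul_sq_le hD v (hc v) ψ
    _ = D * ∑ v ∈ s, ∑ u ∈ G.neighborFinset v, ‖ψ u‖ ^ 2 := (mul_sum ..).symm
    _ ≤ D * (D * ‖ψ‖ ^ 2) := by
        gcongr
        rw [lp.norm_sq_eq_tsum]
        exact sum_sum_neighborFinset_le_mul_tsum hD (fun u => by positivity)
          (lp.summable_norm_sq ψ) s
    _ = (D * ‖ψ‖) ^ 2 := by ring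

theorem norm_mulCLM_commutator_le (hD : ∀ v, G.degree v ≤ D) {W : V → ℝ}
    {H : ℓ²(V, ℂ) →L[ℂ] ℓ²(V, ℂ)}
    (hH : ∀ ψ v, H ψ v = (∑ u ∈ G.neighborFinset v, ψ u) + (W v : ℂ) * ψ v)
    (f : V → ℝ) {K : ℝ} (hf : ∀ v, |f v| ≤ K) (hlip : ∀ v u, G.Adj v u → |f v - f u| ≤ 1) :
    ‖lp.mulCLM f hf * H - H * lp.mulCLM f hf‖ ≤ D := by
  refine ContinuousLinearMap.opNorm_le_bound _ (Nat.cast_nonneg D) fun φ =>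
    G.norm_le_of_eq_sum_neighborFinset hD (c := fun v u => ((f v - f u : ℝ) : ℂ))
      (fun v u h => by simpa only [Complex.norm_real, Real.norm_eq_abs] using hlip v u h)
      fun v => ?_
  simp only [sub_apply, mul_apply_eq_comp, lp.coeFn_sub, Pi.sub_apply, lp.mulCLM_apply, hH,
    Complex.ofReal_sub, sub_mul, sum_sub_distrib, ← mul_sum]
  ring

end SimpleGraph

theorem ballistic_upper_bound_first_moment_general
    {V : Type*} (G : SimpleGraph V)
    [∀ v, Fintype (G.neighborSet v)] (D : ℕ) (hD : ∀ v, G.degree v ≤ D)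
    (o : V) (W : V → ℝ)
    (H : lp (fun _ : V => ℂ) 2 →L[ℂ] lp (fun _ : V => ℂ) 2)
    (hH : ∀ (ψ : lp (fun _ : V => ℂ) 2) (v : V),
      (H ψ : ∀ _ : V, ℂ) v = (∑ u ∈ G.neighborFinset v, (ψ : ∀ _ : V, ℂ) u)
        + (W v : ℂ) * (ψ : ∀ _ : V, ℂ) v)
    (hsa : IsSelfAdjoint H)
    (ψ : lp (fun _ : V => ℂ) 2)
    (hmom : Summable fun v => (G.dist o v : ℝ) ^ 2 * ‖(ψ : ∀ _ : V, ℂ) v‖ ^ 2)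
    (t : ℝ) (ht : 0 ≤ t) :
    ∑' v : V, (G.dist o v : ℝ) ^ 2 *
        ‖(NormedSpace.exp ((-(t : ℂ) * Complex.I) • H) ψ : ∀ _ : V, ℂ) v‖ ^ 2
      ≤ (Real.sqrt (∑' v : V, (G.dist o v : ℝ) ^ 2 * ‖(ψ : ∀ _ : V, ℂ) v‖ ^ 2)
          + t * (D : ℝ) * ‖ψ‖) ^ 2 := by
  refine tsum_sq_mul_le_of_forall_tsum_min_sq_mul_le (G.dist o) (fun v => by positivity)
    (lp.summable_norm_sq _) fun n => ?_
  have hbdd : ∀ v, |min (G.dist o v : ℝ) n| ≤ n := fun v => by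
    rw [abs_of_nonneg (le_min (by positivity) (by positivity))]
    exact min_le_right _ _
  have hlip : ∀ v u, G.Adj v u → |min (G.dist o v : ℝ) n - min (G.dist o u : ℝ) n| ≤ 1 :=
    fun v u h => (abs_min_sub_min_le_max _ _ _ _).trans <| by
      simpa using h.abs_dist_sub_dist_le_one o
  set M := lp.mulCLM (fun v => min (G.dist o v : ℝ) n) hbdd
  have hMψ : ‖M ψ‖ ≤ √(∑' v : V, (G.dist o v : ℝ) ^ 2 * ‖ψ v‖ ^ 2) := by
    refine Real.le_sqrt_of_sq_le ?_
    rw [lp.norm_sq_eq_tsum]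
    refine (lp.summable_norm_sq (M ψ)).tsum_le_tsum (fun v => ?_) hmom
    rw [lp.mulCLM_apply, norm_mul, mul_pow, Complex.norm_real, Real.norm_eq_abs, sq_abs]
    gcongr
    exact min_le_left _ _
  rw [← lp.norm_mulCLM_apply_sq _ hbdd]
  gcongr
  calc ‖M (NormedSpace.exp ((-(t : ℂ) * Complex.I) • H) ψ)‖
      ≤ ‖M ψ‖ + t * ‖M * H - H * M‖ * ‖ψ‖ := hsa.norm_apply_exp_apply_le M ψ ht
    _ ≤ _ := by
        gcongr
        exact G.norm_mulCLM_commutator_le hD hH _ hbdd hlip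

/-- First-moment ballistic upper bound for `H = A + V` on a countable graph of maximal
degree `≤ D`: if `∑_x |x|²|ψ(x)|² < ∞`, then for `t ≥ 0`,
`∑_x |x|² |e^{-itH}ψ(x)|² ≤ (‖|x|ψ‖ + tD‖ψ‖)²`. -/
theorem ballistic_upper_bound_first_moment
    {V : Type*} [Countable V] (G : SimpleGraph V)
    [∀ v, Fintype (G.neighborSet v)] (D : ℕ) (hD : ∀ v, G.degree v ≤ D)
    (o : V) (W : V → ℝ) (C : ℝ) (hW : ∀ v, |W v| ≤ C)
    (H : lp (fun _ : V => ℂ) 2 →L[ℂ] lp (fun _ : V => ℂ) 2)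
    (hH : ∀ (ψ : lp (fun _ : V => ℂ) 2) (v : V),
      (H ψ : ∀ _ : V, ℂ) v = (∑ u ∈ G.neighborFinset v, (ψ : ∀ _ : V, ℂ) u)
        + (W v : ℂ) * (ψ : ∀ _ : V, ℂ) v)
    (hsa : IsSelfAdjoint H)
    (ψ : lp (fun _ : V => ℂ) 2)
    (hmom : Summable fun v => (G.dist o v : ℝ) ^ 2 * ‖(ψ : ∀ _ : V, ℂ) v‖ ^ 2)
    (t : ℝ) (ht : 0 ≤ t) :
    ∑' v : V, (G.dist o v : ℝ) ^ 2 *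
        ‖(NormedSpace.exp ((-(t : ℂ) * Complex.I) • H) ψ : ∀ _ : V, ℂ) v‖ ^ 2
      ≤ (Real.sqrt (∑' v : V, (G.dist o v : ℝ) ^ 2 * ‖(ψ : ∀ _ : V, ℂ) v‖ ^ 2)
          + t * (D : ℝ) * ‖ψ‖) ^ 2 :=
  ballistic_upper_bound_first_moment_general G D hD o W H hH hsa ψ hmom t ht
end

section
/- Let A be the adjacency operator on ℓ²(ℤ), i.e. (Aψ)(n) = ψ(n−1) + ψ(n+1). Then for any ψ ∈ ℓ²(ℤ) with ∑_n n²|ψ(n)|² < ∞, lim_{t→∞} t^{-2} ∑_n n² |e^{itA}ψ(n)|² = 2‖ψ‖² − ⟨ψ, S₂ψ⟩, where (S₂ψ)(n) = ψ(n−2) + ψ(n+2). Moreover this limit is strictly positive when ψ ≠ 0. -/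
/-!
With `X` the position operator and `D = S₋₁ - S₁` (where `(Sⱼψ)(n) = ψ(n + j)`), one has
`[X, A] = D` and `[A, D] = 0`, hence `X e^{zA} ψ = e^{zA} (Xψ + z Dψ)`. As `e^{itA}` is unitary,
the second moment of `e^{itA} ψ` is `‖Xψ + it Dψ‖²`, so divided by `t²` it tends to
`‖Dψ‖² = 2‖ψ‖² - ⟨ψ, (S₋₂ + S₂)ψ⟩`. If `Dψ = 0` then `ψ` is 2-periodic, which forces `ψ = 0` in `ℓ²`.
-/

open Filter Topology NormedSpace Complex
open scoped ComplexConjugate Nat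

noncomputable section

theorem mul_pow_succ_eq_pow_succ_mul_add {R : Type*} [Semiring R] {x a d : R}
    (h : x * a = a * x + d) (had : Commute a d) (k : ℕ) :
    x * a ^ (k + 1) = a ^ (k + 1) * x + (k + 1) • (a ^ k * d) := by
  induction k with
  | zero => simpa using h
  | succ k ih =>
    calc x * a ^ (k + 1 + 1) = (a ^ (k + 1) * x + (k + 1) • (a ^ k * d)) * a := by
          rw [pow_succ _ (k + 1), ← mul_assoc, ih]
      _ = a ^ (k + 1) * (x * a) + (k + 1) • (a ^ k * (d * a)) := by
          rw [add_mul, smul_mul_assoc, mul_assoc, mul_assoc]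
      _ = a ^ (k + 1 + 1) * x + (k + 1 + 1) • (a ^ (k + 1) * d) := by
          rw [h, ← had.eq, mul_add, ← mul_assoc, ← mul_assoc, ← pow_succ, ← pow_succ,
            succ_nsmul _ (k + 1)]
          abel

theorem HasSum.expSeries_coeff_mul_pred {𝕂 F : Type*} [Field 𝕂] [CharZero 𝕂] [AddCommGroup F]
    [TopologicalSpace F] [IsTopologicalAddGroup F] [Module 𝕂 F] [ContinuousConstSMul 𝕂 F]
    {z : 𝕂} {v : ℕ → F} {s : F} (h : HasSum (fun k => ((k ! : 𝕂)⁻¹ * z ^ k) • v k) s) :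
    HasSum (fun k => ((k ! : 𝕂)⁻¹ * z ^ k * k) • v (k - 1)) (z • s) := by
  rw [← hasSum_nat_add_iff' 1]
  simp only [Finset.range_one, Finset.sum_singleton, CharP.cast_eq_zero, mul_zero, zero_smul,
    sub_zero, add_tsub_cancel_right]
  convert h.const_smul z using 2 with k
  rw [smul_smul, Nat.factorial_succ]
  congr 1
  push_cast
  field_simp
  ring

theorem hasSum_exp_smul_apply {𝕂 F : Type*} [RCLike 𝕂] [NormedAddCommGroup F] [NormedSpace 𝕂 F]
    [CompleteSpace F] (z : 𝕂) (T : F →L[𝕂] F) (v : F) :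
    HasSum (fun k => ((k ! : 𝕂)⁻¹ * z ^ k) • (T ^ k) v) (exp (z • T) v) := by
  have := (exp_series_hasSum_exp' (𝕂 := 𝕂) (z • T)).mapL (ContinuousLinearMap.apply 𝕂 F v)
  simpa [smul_pow, mul_smul] using this

theorem IsSelfAdjoint.norm_exp_ofReal_mul_I_smul_apply {H : Type*} [NormedAddCommGroup H]
    [InnerProductSpace ℂ H] [CompleteSpace H] {A : H →L[ℂ] H} (hA : IsSelfAdjoint A) (t : ℝ)
    (v : H) : ‖NormedSpace.exp (((t : ℂ) * I) • A) v‖ = ‖v‖ := by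
  have hskew : ((t : ℂ) * I) • A ∈ skewAdjoint (H →L[ℂ] H) := by
    rw [skewAdjoint.mem_iff, star_smul, hA.star_eq, ← neg_smul]
    simp
  let +nondep : NormedAlgebra ℚ (H →L[ℂ] H) := .restrictScalars ℚ ℂ _
  have hU := exp_mem_unitary_of_mem_skewAdjoint hskew
  exact ContinuousLinearMap.norm_map_of_mem_unitary hU v

theorem tendsto_norm_add_smul_div {𝕜 F : Type*} [RCLike 𝕜] [NormedAddCommGroup F]
    [NormedSpace 𝕜 F] (x y : F) :
    Tendsto (fun t : ℝ => ‖x + (t : 𝕜) • y‖ / t) atTop (𝓝 ‖y‖) := by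
  have hinv : Tendsto (fun t : ℝ => ((t⁻¹ : ℝ) : 𝕜)) atTop (𝓝 0) := by
    have := ((RCLike.continuous_ofReal (K := 𝕜)).tendsto 0).comp tendsto_inv_atTop_zero
    rwa [RCLike.ofReal_zero] at this
  have hlim : Tendsto (fun t : ℝ => ‖((t⁻¹ : ℝ) : 𝕜) • x + y‖) atTop (𝓝 ‖y‖) := by
    simpa using ((hinv.smul_const x).add_const y).norm
  refine hlim.congr' ?_
  filter_upwards [eventually_gt_atTop 0] with t ht
  rw [div_eq_inv_mul, ← abs_of_pos (inv_pos.2 ht), ← RCLike.norm_ofReal (K := 𝕜), ← norm_smul,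
    smul_add, smul_smul, RCLike.ofReal_inv, inv_mul_cancel₀ (by exact_mod_cast ht.ne'), one_smul]
  simp [abs_of_pos ht]

theorem Function.Periodic.eq_zero_of_tendsto_cofinite {M : Type*} [TopologicalSpace M]
    [T1Space M] [Zero M] {f : ℤ → M} {c : ℤ} (hf : Periodic f c) (hc : c ≠ 0)
    (h : Tendsto f cofinite (𝓝 0)) : f = 0 := by
  ext n
  have hinj : Function.Injective fun k : ℕ => n + k * c := fun k l hkl => by
    simpa [hc] using hkl
  have := h.comp (Nat.cofinite_eq_atTop ▸ hinj.tendsto_cofinite)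
  simpa [Function.comp_def, hf.nat_mul _ n, tendsto_const_nhds_iff] using this

theorem lp.norm_sq_eq_tsum_s13 {ι : Type*} {E : ι → Type*} [∀ i, NormedAddCommGroup (E i)]
    (f : lp E 2) : ‖f‖ ^ 2 = ∑' i, ‖f i‖ ^ 2 := by
  simpa using lp.norm_rpow_eq_tsum (p := 2) (by norm_num) f

namespace lp

variable {𝕜 E G : Type*} [RCLike 𝕜] [NormedAddCommGroup E] [InnerProductSpace 𝕜 E] [AddGroup G]

theorem memℓp_comp_add_right (f : lp (fun _ : G => E) 2) (j : G) :
    Memℓp (fun n => f (n + j)) 2 := by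
  have hf : Summable fun n => ‖f n‖ ^ (2 : ENNReal).toReal := (lp.memℓp f).summable (by norm_num)
  have hfj := (Equiv.addRight j).summable_iff.2 hf
  exact memℓp_gen hfj

variable (𝕜) in
def shift (j : G) : lp (fun _ : G => E) 2 →ₗᵢ[𝕜] lp (fun _ : G => E) 2 where
  toFun f := ⟨fun n => f (n + j), memℓp_comp_add_right f j⟩
  map_add' _ _ := rfl
  map_smul' _ _ := rfl
  norm_map' f := by
    simp only [lp.norm_eq_tsum_rpow (p := 2) (by norm_num)]
    congr 1
    exact (Equiv.addRight j).tsum_eq fun n => ‖f n‖ ^ (2 : ENNReal).toReal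

@[simp]
theorem shift_apply (j : G) (f : lp (fun _ : G => E) 2) (n : G) :
    shift 𝕜 j f n = f (n + j) := rfl

theorem shift_shift (j k : G) (f : lp (fun _ : G => E) 2) :
    shift 𝕜 j (shift 𝕜 k f) = shift 𝕜 (j + k) f := by
  ext n
  simp [add_assoc]

theorem shift_zero (f : lp (fun _ : G => E) 2) : shift 𝕜 0 f = f := by
  ext n
  simp

theorem inner_shift_left (j : G) (f g : lp (fun _ : G => E) 2) :
    inner 𝕜 (shift 𝕜 j f) g = inner 𝕜 f (shift 𝕜 (-j) g) := by
  conv_lhs => rw [← shift_zero (𝕜 := 𝕜) g, ← add_neg_cancel j, ← shift_shift]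
  exact LinearIsometry.inner_map_map _ _ _

theorem norm_shift_neg_sub_shift_sq (j : G) (f : lp (fun _ : G => E) 2) :
    ‖shift 𝕜 (-j) f - shift 𝕜 j f‖ ^ 2
      = 2 * ‖f‖ ^ 2 - RCLike.re (inner 𝕜 f (shift 𝕜 (-(j + j)) f + shift 𝕜 (j + j) f)) := by
  have h1 : inner 𝕜 (shift 𝕜 (-j) f) (shift 𝕜 j f) = inner 𝕜 f (shift 𝕜 (j + j) f) := by
    rw [inner_shift_left, neg_neg, shift_shift]
  have h2 : RCLike.re (inner 𝕜 f (shift 𝕜 (-(j + j)) f))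
      = RCLike.re (inner 𝕜 f (shift 𝕜 (j + j) f)) := by
    rw [← inner_shift_left, inner_re_symm]
  rw [norm_sub_sq (𝕜 := 𝕜), LinearIsometry.norm_map, LinearIsometry.norm_map, h1,
    inner_add_right, map_add, h2]
  ring

theorem shift_neg_one_sub_shift_one_ne_zero {ψ : lp (fun _ : ℤ => E) 2} (hψ : ψ ≠ 0) :
    shift 𝕜 (-1) ψ - shift 𝕜 1 ψ ≠ 0 := by
  intro h
  have hper : Function.Periodic (fun n => ‖ψ n‖ ^ 2) 2 := fun n => by
    have h1 := congrArg (fun f : lp (fun _ : ℤ => E) 2 => f (n + 1)) h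
    simp only [lp.coeFn_sub, Pi.sub_apply, lp.shift_apply, lp.coeFn_zero, Pi.zero_apply,
      sub_eq_zero, add_assoc, add_neg_cancel, add_zero, one_add_one_eq_two] at h1
    exact congrArg (‖·‖ ^ 2) h1.symm
  have hsum : Summable fun n => ‖ψ n‖ ^ 2 := by
    simpa using (lp.memℓp ψ).summable (p := 2) (by norm_num)
  have hzero := hper.eq_zero_of_tendsto_cofinite two_ne_zero hsum.tendsto_cofinite_zero
  exact hψ (lp.ext (funext fun n => by simpa using congrFun hzero n))

end lp

section Lattice

variable (R M : Type*) [Ring R] [AddCommGroup M] [Module R M]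

def latticeAdjacency : Module.End R (ℤ → M) :=
  LinearMap.funLeft R M (· - 1) + LinearMap.funLeft R M (· + 1)

def latticeDifference : Module.End R (ℤ → M) :=
  LinearMap.funLeft R M (· - 1) - LinearMap.funLeft R M (· + 1)

def latticePosition : Module.End R (ℤ → M) where
  toFun f n := n • f n
  map_add' f g := by ext n; simp [smul_add]
  map_smul' c f := funext fun n => smul_comm (n : ℤ) c (f n)

variable {R M}

@[simp]
theorem latticeAdjacency_apply (f : ℤ → M) (n : ℤ) :
    latticeAdjacency R M f n = f (n - 1) + f (n + 1) := rfl

@[simp]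
theorem latticeDifference_apply (f : ℤ → M) (n : ℤ) :
    latticeDifference R M f n = f (n - 1) - f (n + 1) := rfl

@[simp]
theorem latticePosition_apply (f : ℤ → M) (n : ℤ) : latticePosition R M f n = n • f n := rfl

variable (R M)

theorem latticePosition_mul_latticeAdjacency :
    latticePosition R M * latticeAdjacency R M
      = latticeAdjacency R M * latticePosition R M + latticeDifference R M := by
  refine LinearMap.ext fun f => funext fun n => ?_
  simp only [Module.End.mul_apply, LinearMap.add_apply, Pi.add_apply, latticePosition_apply,
    latticeAdjacency_apply, latticeDifference_apply, smul_add, sub_smul, add_smul, one_smul]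
  abel

theorem commute_latticeAdjacency_latticeDifference :
    Commute (latticeAdjacency R M) (latticeDifference R M) := by
  refine LinearMap.ext fun f => funext fun n => ?_
  simp only [Module.End.mul_apply, latticeAdjacency_apply, latticeDifference_apply,
    sub_add_cancel, add_sub_cancel_right]
  abel

end Lattice

local notation "ℓ²(ℤ)" => lp (fun _ : ℤ => ℂ) 2

theorem memℓp_two_intCast_mul {ψ : ℓ²(ℤ)}
    (hmom : Summable fun n : ℤ => (n : ℝ) ^ 2 * ‖ψ n‖ ^ 2) :
    Memℓp (fun n : ℤ => (n : ℂ) * ψ n) 2 := by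
  refine memℓp_gen ?_
  simpa [norm_mul, mul_pow] using hmom

section Adjacency

variable {A : ℓ²(ℤ) →L[ℂ] ℓ²(ℤ)}

theorem coe_pow_apply_of_adjacency
    (hA : ∀ f : ℓ²(ℤ), ⇑(A f) = latticeAdjacency ℂ ℂ f) (k : ℕ) (f : ℓ²(ℤ)) :
    ⇑((A ^ k) f) = (latticeAdjacency ℂ ℂ ^ k) ⇑f := by
  induction k with
  | zero => rfl
  | succ k ih =>
    rw [pow_succ', mul_apply_eq_comp, pow_succ', Module.End.mul_apply, ← ih]
    exact hA _

theorem eq_shift_add_shift_of_adjacency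
    (hA : ∀ f : ℓ²(ℤ), ⇑(A f) = latticeAdjacency ℂ ℂ f) (f : ℓ²(ℤ)) :
    A f = lp.shift ℂ (-1) f + lp.shift ℂ 1 f := by
  ext n
  simp [hA, sub_eq_add_neg]

theorem isSelfAdjoint_of_adjacency
    (hA : ∀ f : ℓ²(ℤ), ⇑(A f) = latticeAdjacency ℂ ℂ f) :
    IsSelfAdjoint A := by
  refine ContinuousLinearMap.isSelfAdjoint_iff_isSymmetric.2 fun f g => ?_
  simp only [ContinuousLinearMap.coe_coe, eq_shift_add_shift_of_adjacency hA, inner_add_left,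
    inner_add_right, lp.inner_shift_left, neg_neg]
  exact add_comm _ _

/-- The position operator is unbounded, so `X e^{zA} = e^{zA} (X + zD)` is proved one coordinate
at a time, through the exponential series and `[X, Aᵏ⁺¹] = (k + 1) Aᵏ D`. -/
theorem mul_exp_smul_apply_of_adjacency
    (hA : ∀ f : ℓ²(ℤ), ⇑(A f) = latticeAdjacency ℂ ℂ f)
    (z : ℂ) {ψ χ : ℓ²(ℤ)} (hχ : ∀ n, χ n = n * ψ n) (n : ℤ) :
    n * exp (z • A) ψ n = exp (z • A) (χ + z • (lp.shift ℂ (-1) ψ - lp.shift ℂ 1 ψ)) n := by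
  set β := lp.shift ℂ (-1) ψ - lp.shift ℂ 1 ψ
  have hser : ∀ v : ℓ²(ℤ),
      HasSum (fun k => ((k ! : ℂ)⁻¹ * z ^ k) • (A ^ k) v n) (exp (z • A) v n) := fun v =>
    (hasSum_exp_smul_apply z A v).mapL (lp.evalCLM ℂ (fun _ : ℤ => ℂ) 2 n)
  have hχ' : latticePosition ℂ ℂ ψ = χ := funext fun n => by simp [hχ]
  have hβ' : latticeDifference ℂ ℂ ψ = β := funext fun n => by simp [β, sub_eq_add_neg]
  have hcomm : ∀ k : ℕ, (n : ℂ) * (A ^ k) ψ n = (A ^ k) χ n + k * (A ^ (k - 1)) β n := by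
    rintro (_ | k)
    · simp [hχ]
    · have := congrFun (LinearMap.congr_fun (mul_pow_succ_eq_pow_succ_mul_add
        (latticePosition_mul_latticeAdjacency ℂ ℂ)
        (commute_latticeAdjacency_latticeDifference ℂ ℂ) k) ψ) n
      simp only [Module.End.mul_apply, LinearMap.add_apply, LinearMap.smul_apply, Pi.add_apply,
        Pi.smul_apply, latticePosition_apply, hχ', hβ', zsmul_eq_mul] at this
      rw [coe_pow_apply_of_adjacency hA, coe_pow_apply_of_adjacency hA,
        coe_pow_apply_of_adjacency hA, Nat.add_sub_cancel, ← nsmul_eq_mul]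
      exact this
  have hsum := (hser χ).add (hser β).expSeries_coeff_mul_pred
  rw [map_add, map_smul, lp.coeFn_add, lp.coeFn_smul, Pi.add_apply, Pi.smul_apply]
  refine ((hser ψ).mul_left (n : ℂ)).unique (hsum.congr_fun fun k => ?_)
  rw [smul_eq_mul, smul_eq_mul, smul_eq_mul, mul_left_comm, hcomm]
  ring

end Adjacency

end

/-- Exact ballistic transport for the adjacency operator on `ℤ` (first moment):
`lim_{t→∞} t^{-2} ∑_n n²|e^{itA}ψ(n)|² = 2‖ψ‖² − ⟨ψ, S₂ψ⟩`, which is positive if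
`ψ ≠ 0`. -/
theorem adjacency_Z_ballistic
    (A : lp (fun _ : ℤ => ℂ) 2 →L[ℂ] lp (fun _ : ℤ => ℂ) 2)
    (hA : ∀ (ψ : lp (fun _ : ℤ => ℂ) 2) (n : ℤ),
      (A ψ : ∀ _ : ℤ, ℂ) n = (ψ : ∀ _ : ℤ, ℂ) (n - 1) + (ψ : ∀ _ : ℤ, ℂ) (n + 1))
    (ψ : lp (fun _ : ℤ => ℂ) 2)
    (hmom : Summable fun n : ℤ => (n : ℝ) ^ 2 * ‖(ψ : ∀ _ : ℤ, ℂ) n‖ ^ 2) :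
    Tendsto (fun t : ℝ =>
        (∑' n : ℤ, (n : ℝ) ^ 2 *
          ‖(NormedSpace.exp (((t : ℂ) * Complex.I) • A) ψ : ∀ _ : ℤ, ℂ) n‖ ^ 2) / t ^ 2)
      atTop
      (nhds (2 * ‖ψ‖ ^ 2 -
        (∑' n : ℤ, (starRingEnd ℂ) ((ψ : ∀ _ : ℤ, ℂ) n) *
          ((ψ : ∀ _ : ℤ, ℂ) (n - 2) + (ψ : ∀ _ : ℤ, ℂ) (n + 2))).re)) ∧
    (ψ ≠ 0 → 0 < 2 * ‖ψ‖ ^ 2 -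
        (∑' n : ℤ, (starRingEnd ℂ) ((ψ : ∀ _ : ℤ, ℂ) n) *
          ((ψ : ∀ _ : ℤ, ℂ) (n - 2) + (ψ : ∀ _ : ℤ, ℂ) (n + 2))).re) := by
  have hA' : ∀ f, ⇑(A f) = latticeAdjacency ℂ ℂ f := fun f => funext (hA f)
  set β := lp.shift ℂ (-1) ψ - lp.shift ℂ 1 ψ
  set χ : lp (fun _ : ℤ => ℂ) 2 := ⟨fun n => n * ψ n, memℓp_two_intCast_mul hmom⟩
  have hlimit : 2 * ‖ψ‖ ^ 2 - (∑' n : ℤ, conj (ψ n) * (ψ (n - 2) + ψ (n + 2))).re = ‖β‖ ^ 2 := by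
    rw [lp.norm_shift_neg_sub_shift_sq, lp.inner_eq_tsum]
    simp [RCLike.inner_apply, mul_comm, sub_eq_add_neg]
  have hmoment : ∀ t : ℝ, ∑' n : ℤ, (n : ℝ) ^ 2 * ‖exp (((t : ℂ) * I) • A) ψ n‖ ^ 2
      = ‖χ + (t : ℂ) • (I • β)‖ ^ 2 := fun t => by
    rw [smul_smul, ← (isSelfAdjoint_of_adjacency hA').norm_exp_ofReal_mul_I_smul_apply t,
      lp.norm_sq_eq_tsum_s13]
    refine tsum_congr fun n => ?_
    rw [← mul_exp_smul_apply_of_adjacency hA' _ (fun n => rfl)]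
    simp [mul_pow]
  rw [hlimit]
  refine ⟨?_, fun hψ => pow_pos (norm_pos_iff.2 (lp.shift_neg_one_sub_shift_one_ne_zero hψ)) 2⟩
  simp_rw [hmoment, ← div_pow]
  have := (tendsto_norm_add_smul_div (𝕜 := ℂ) χ (I • β)).pow 2
  rwa [norm_smul, Complex.norm_I, one_mul] at this
end
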